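/- Let γ be a non-real complex algebraic number of degree m over ℚ with Galois group S_m. Then the imaginary part of γ differs from the imaginary part of every complex algebraic number β of degree strictly smaller than m over ℚ: Im γ ≠ Im β. -/

import Mathlib

open Polynomial IntermediateField

private lemma exists_perm_pair {X : Type*} [DecidableEq X] {a b c e : X}
    (hab : a ≠ b) (hce : c ≠ e) : ∃ π : Equiv.Perm X, π a = c ∧ π b = e := by
  have h1 : Equiv.swap a c b ≠ c := by
    rcases eq_or_ne b c with rfl | h
    · rw [Equiv.swap_apply_right]
      exact fun h => hab h
    · rw [Equiv.swap_apply_of_ne_of_ne (Ne.symm hab) h]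
      exact h
  refine ⟨(Equiv.swap (Equiv.swap a c b) e) * (Equiv.swap a c), ?_, ?_⟩
  · rw [Equiv.Perm.mul_apply, Equiv.swap_apply_left,
      Equiv.swap_apply_of_ne_of_ne (Ne.symm h1) hce]
  · rw [Equiv.Perm.mul_apply, Equiv.swap_apply_left]

/-- Wilms' lemma: if `γ` is a non-real algebraic number of degree `m` over `ℚ`
with Galois group the full symmetric group, then `Im γ ≠ Im β` for every
algebraic `β` of degree strictly smaller than `m`. -/
theorem im_ne_im_of_small_degree (γ : ℂ) (hγreal : γ.im ≠ 0) (hγ : IsAlgebraic ℚ γ)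
    (m : ℕ) (hdeg : (minpoly ℚ γ).natDegree = m)
    [Fact (((minpoly ℚ γ).map (algebraMap ℚ ℂ)).Splits)]
    (hGal : Function.Bijective (Polynomial.Gal.galActionHom (minpoly ℚ γ) ℂ))
    (β : ℂ) (hβ : IsAlgebraic ℚ β) (hdβ : (minpoly ℚ β).natDegree < m) :
    γ.im ≠ β.im := by
  intro him
  classical
  set p := minpoly ℚ γ with hp
  have hγint : IsIntegral ℚ γ := hγ.isIntegral
  have hβint : IsIntegral ℚ β := hβ.isIntegral
  have hpne : p ≠ 0 := minpoly.ne_zero hγint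
  -- complex conjugation as a `ℚ`-algebra homomorphism
  let c : ℂ →ₐ[ℚ] ℂ := (Complex.conjAe.toAlgHom.restrictScalars ℚ)
  have hcinj : Function.Injective c := fun a b h => Complex.conjAe.injective h
  have hminc : ∀ z : ℂ, minpoly ℚ ((starRingEnd ℂ) z) = minpoly ℚ z := fun z =>
    minpoly.algHom_eq c hcinj z
  -- the conjugates
  have hne : γ ≠ (starRingEnd ℂ) γ := by
    intro h
    exact hγreal (Complex.conj_eq_iff_im.mp h.symm)
  have hγR : γ ∈ p.rootSet ℂ := by
    rw [Polynomial.mem_rootSet]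
    exact ⟨hpne, minpoly.aeval ℚ γ⟩
  have hγcR : (starRingEnd ℂ) γ ∈ p.rootSet ℂ := by
    rw [Polynomial.mem_rootSet]
    refine ⟨hpne, ?_⟩
    rw [hp, ← hminc γ]
    exact minpoly.aeval ℚ _
  have key : γ - (starRingEnd ℂ) γ = β - (starRingEnd ℂ) β := by
    rw [Complex.sub_conj, Complex.sub_conj, him]
  -- integrality facts
  have hγcint : IsIntegral ℚ ((starRingEnd ℂ) γ) := hγint.map c
  have hβcint : IsIntegral ℚ ((starRingEnd ℂ) β) := hβint.map c
  have hαint : IsIntegral ℚ (γ - (starRingEnd ℂ) γ) := hγint.sub hγcint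
  -- coercion computations for the Galois action on complex roots
  have coe_eq : ∀ u : p.rootSet ℂ, (u : ℂ) = algebraMap p.SplittingField ℂ
      (((Polynomial.Gal.rootsEquivRoots p ℂ).symm u :
        p.rootSet p.SplittingField) : p.SplittingField) := by
    intro u
    conv_lhs => rw [← (Polynomial.Gal.rootsEquivRoots p ℂ).apply_symm_apply u]
    rfl
  have smul_coe : ∀ (σ : p.Gal) (u : p.rootSet ℂ),
      ((Polynomial.Gal.galActionHom p ℂ σ u : ℂ)) = algebraMap p.SplittingField ℂ
        (σ (((Polynomial.Gal.rootsEquivRoots p ℂ).symm u :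
          p.rootSet p.SplittingField) : p.SplittingField)) := fun σ u => rfl
  have diff_eq : ∀ (σ : p.Gal) (u v : p.rootSet ℂ),
      (Polynomial.Gal.galActionHom p ℂ σ u : ℂ) - (Polynomial.Gal.galActionHom p ℂ σ v : ℂ)
        = algebraMap p.SplittingField ℂ
          (σ ((((Polynomial.Gal.rootsEquivRoots p ℂ).symm u :
              p.rootSet p.SplittingField) : p.SplittingField) -
            (((Polynomial.Gal.rootsEquivRoots p ℂ).symm v :
              p.rootSet p.SplittingField) : p.SplittingField))) := by
    intro σ u v
    rw [smul_coe, smul_coe, ← map_sub, ← map_sub]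
  have galEq : ∀ (σ : p.Gal) (w : p.SplittingField), minpoly ℚ (σ w) = minpoly ℚ w :=
    fun σ w => minpoly.algEquiv_eq σ w
  have minpoly_diff : ∀ (σ : p.Gal) (u v : p.rootSet ℂ),
      minpoly ℚ ((Polynomial.Gal.galActionHom p ℂ σ u : ℂ) -
        (Polynomial.Gal.galActionHom p ℂ σ v : ℂ)) = minpoly ℚ ((u : ℂ) - (v : ℂ)) := by
    intro σ u v
    rw [diff_eq σ u v, coe_eq u, coe_eq v, ← map_sub,
      minpoly.algebraMap_eq (algebraMap p.SplittingField ℂ).injective,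
      minpoly.algebraMap_eq (algebraMap p.SplittingField ℂ).injective]
    exact galEq σ _
  have move : ∀ (π : Equiv.Perm (p.rootSet ℂ)) (u v s t : p.rootSet ℂ),
      (u : ℂ) - (v : ℂ) = (s : ℂ) - (t : ℂ) →
      ((π u : ℂ)) - ((π v : ℂ)) = ((π s : ℂ)) - ((π t : ℂ)) := by
    intro π u v s t h
    obtain ⟨σ, hσ⟩ := hGal.2 π
    rw [coe_eq u, coe_eq v, coe_eq s, coe_eq t, ← map_sub, ← map_sub] at h
    replace h := (algebraMap p.SplittingField ℂ).injective h
    rw [← hσ, diff_eq, diff_eq, h]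
  -- Claim A: all differences of two distinct roots have the same minimal polynomial
  have claimA : ∀ x ∈ p.rootSet ℂ, ∀ y ∈ p.rootSet ℂ, x ≠ y →
      minpoly ℚ (x - y) = minpoly ℚ (γ - (starRingEnd ℂ) γ) := by
    intro x hx y hy hxy
    obtain ⟨π, hπ1, hπ2⟩ := exists_perm_pair (X := p.rootSet ℂ)
      (a := ⟨γ, hγR⟩) (b := ⟨(starRingEnd ℂ) γ, hγcR⟩) (c := ⟨x, hx⟩) (e := ⟨y, hy⟩)
      (fun h => hne (congrArg Subtype.val h)) (fun h => hxy (congrArg Subtype.val h))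
    obtain ⟨σ, hσ⟩ := hGal.2 π
    have h := minpoly_diff σ ⟨γ, hγR⟩ ⟨(starRingEnd ℂ) γ, hγcR⟩
    rw [hσ, hπ1, hπ2] at h
    exact h
  -- distinctness of the differences of roots
  have dist : ∀ x ∈ p.rootSet ℂ, ∀ y ∈ p.rootSet ℂ, ∀ z ∈ p.rootSet ℂ, ∀ w ∈ p.rootSet ℂ,
      x ≠ y → z ≠ w → x - y = z - w → x = z ∧ y = w := by
    intro x hx y hy z hz w hw hxy hzw heq
    by_cases hxz : x = z
    · exact ⟨hxz, by linear_combination hxz - heq⟩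
    exfalso
    have hyw : y ≠ w := fun h => hxz (by linear_combination heq + h)
    set a : p.rootSet ℂ := ⟨x, hx⟩ with ha
    set b : p.rootSet ℂ := ⟨y, hy⟩ with hb
    set z' : p.rootSet ℂ := ⟨z, hz⟩ with hz'
    set w' : p.rootSet ℂ := ⟨w, hw⟩ with hw'
    have nab : a ≠ b := fun h => hxy (congrArg Subtype.val h)
    by_cases hxw : x = w
    · by_cases hyz : y = z
      · subst hxw; subst hyz
        exact hxy (by linear_combination heq / 2)
      · -- x = w : relation x - y = z - x among distinct x, y, z
        subst hxw
        have nza : z' ≠ a := fun h => hxz (congrArg Subtype.val h).symm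
        have nzb : z' ≠ b := fun h => hyz (congrArg Subtype.val h).symm
        have h2 := move (Equiv.swap a b) a b z' a heq
        rw [Equiv.swap_apply_left, Equiv.swap_apply_right,
          Equiv.swap_apply_of_ne_of_ne nza nzb] at h2
        -- h2 : y - x = z - y
        exact hxy (by linear_combination (heq - h2) / 3)
    · by_cases hyz : y = z
      · -- y = z : relation x - y = y - w among distinct x, y, w
        subst hyz
        have nwa : w' ≠ a := fun h => hxw (congrArg Subtype.val h).symm
        have nwb : w' ≠ b := fun h => hyw (congrArg Subtype.val h).symm
        have h2 := move (Equiv.swap a b) a b b w' heq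
        rw [Equiv.swap_apply_left, Equiv.swap_apply_right,
          Equiv.swap_apply_of_ne_of_ne nwa nwb] at h2
        -- h2 : y - x = x - w
        exact hxy (by linear_combination (heq - h2) / 3)
      · -- all four distinct
        have naz : a ≠ z' := fun h => hxz (congrArg Subtype.val h)
        have naw : a ≠ w' := fun h => hxw (congrArg Subtype.val h)
        have nbz : b ≠ z' := fun h => hyz (congrArg Subtype.val h)
        have nbw : b ≠ w' := fun h => hyw (congrArg Subtype.val h)
        have h2 := move (Equiv.swap z' w') a b z' w' heq
        rw [Equiv.swap_apply_left, Equiv.swap_apply_right,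
          Equiv.swap_apply_of_ne_of_ne naz naw,
          Equiv.swap_apply_of_ne_of_ne nbz nbw] at h2
        -- h2 : x - y = w - z
        exact hzw (by linear_combination (h2 - heq) / 2)
  -- upper bound on the degree of γ - conj γ
  set d := (minpoly ℚ β).natDegree with hd
  have hd1 : 0 < d := minpoly.natDegree_pos hβint
  haveI f1 : FiniteDimensional ℚ ℚ⟮β⟯ := IntermediateField.adjoin.finiteDimensional hβint
  haveI f2 : FiniteDimensional ℚ ℚ⟮(starRingEnd ℂ) β⟯ :=
    IntermediateField.adjoin.finiteDimensional hβcint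
  haveI hsupfin : FiniteDimensional ℚ ↥(ℚ⟮β⟯ ⊔ ℚ⟮(starRingEnd ℂ) β⟯) :=
    IntermediateField.finiteDimensional_sup _ _
  have hmemsup : γ - (starRingEnd ℂ) γ ∈ ℚ⟮β⟯ ⊔ ℚ⟮(starRingEnd ℂ) β⟯ := by
    rw [key]
    exact sub_mem
      ((le_sup_left : ℚ⟮β⟯ ≤ _) (IntermediateField.mem_adjoin_simple_self ℚ β))
      ((le_sup_right : ℚ⟮(starRingEnd ℂ) β⟯ ≤ _)
        (IntermediateField.mem_adjoin_simple_self ℚ _))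
  have hadj_le : ℚ⟮γ - (starRingEnd ℂ) γ⟯ ≤ ℚ⟮β⟯ ⊔ ℚ⟮(starRingEnd ℂ) β⟯ :=
    IntermediateField.adjoin_simple_le_iff.mpr hmemsup
  have hub : (minpoly ℚ (γ - (starRingEnd ℂ) γ)).natDegree ≤ d * d := by
    rw [← IntermediateField.adjoin.finrank hαint]
    haveI : Module.Finite ℚ
        ↥(Subalgebra.toSubmodule (ℚ⟮β⟯ ⊔ ℚ⟮(starRingEnd ℂ) β⟯).toSubalgebra) := hsupfin
    calc Module.finrank ℚ ℚ⟮γ - (starRingEnd ℂ) γ⟯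
        ≤ Module.finrank ℚ ↥(ℚ⟮β⟯ ⊔ ℚ⟮(starRingEnd ℂ) β⟯) := by
          exact Submodule.finrank_mono
            (s := Subalgebra.toSubmodule ℚ⟮γ - (starRingEnd ℂ) γ⟯.toSubalgebra)
            (t := Subalgebra.toSubmodule (ℚ⟮β⟯ ⊔ ℚ⟮(starRingEnd ℂ) β⟯).toSubalgebra)
            (fun x hx => hadj_le hx)
      _ ≤ Module.finrank ℚ ℚ⟮β⟯ * Module.finrank ℚ ℚ⟮(starRingEnd ℂ) β⟯ :=
          IntermediateField.finrank_sup_le _ _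
      _ = d * d := by
          rw [IntermediateField.adjoin.finrank hβint, IntermediateField.adjoin.finrank hβcint,
            hminc β]
  -- lower bound: all m(m-1) differences of roots are distinct roots of minpoly (γ - conj γ)
  have hsep : p.Separable := (minpoly.irreducible hγint).separable
  have hsplit : (p.map (algebraMap ℚ ℂ)).Splits := Fact.out
  have hcard : ((p.aroots ℂ).toFinset).card = m := by
    rw [Multiset.toFinset_card_of_nodup (Polynomial.nodup_roots hsep.map), ← hdeg]
    exact hsplit.natDegree_eq_card_roots.symm.trans (Polynomial.natDegree_map _)
  have memiff : ∀ x : ℂ, x ∈ (p.aroots ℂ).toFinset ↔ x ∈ p.rootSet ℂ := fun x => Iff.rfl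
  have hinj : Set.InjOn (fun q : ℂ × ℂ => q.1 - q.2) ((p.aroots ℂ).toFinset.offDiag : Finset (ℂ × ℂ)) := by
    intro u hu v hv huv
    rw [Finset.mem_coe, Finset.mem_offDiag] at hu hv
    obtain ⟨e1, e2⟩ := dist u.1 ((memiff _).mp hu.1) u.2 ((memiff _).mp hu.2.1)
      v.1 ((memiff _).mp hv.1) v.2 ((memiff _).mp hv.2.1) hu.2.2 hv.2.2 huv
    exact Prod.ext e1 e2
  have hTcard : (((p.aroots ℂ).toFinset.offDiag).image (fun q : ℂ × ℂ => q.1 - q.2)).card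
      = m * m - m := by
    rw [Finset.card_image_of_injOn hinj, Finset.offDiag_card, hcard]
  have hTsub : ((p.aroots ℂ).toFinset.offDiag).image (fun q : ℂ × ℂ => q.1 - q.2)
      ⊆ ((minpoly ℚ (γ - (starRingEnd ℂ) γ)).aroots ℂ).toFinset := by
    intro t ht
    rw [Finset.mem_image] at ht
    obtain ⟨u, hu, rfl⟩ := ht
    rw [Finset.mem_offDiag] at hu
    rw [Multiset.mem_toFinset, Polynomial.mem_aroots]
    refine ⟨minpoly.ne_zero hαint, ?_⟩
    rw [← claimA u.1 ((memiff _).mp hu.1) u.2 ((memiff _).mp hu.2.1) hu.2.2]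
    exact minpoly.aeval ℚ _
  have hlb : m * m - m ≤ (minpoly ℚ (γ - (starRingEnd ℂ) γ)).natDegree := by
    calc m * m - m
        = (((p.aroots ℂ).toFinset.offDiag).image (fun q : ℂ × ℂ => q.1 - q.2)).card :=
          hTcard.symm
      _ ≤ (((minpoly ℚ (γ - (starRingEnd ℂ) γ)).aroots ℂ).toFinset).card :=
          Finset.card_le_card hTsub
      _ ≤ Multiset.card ((minpoly ℚ (γ - (starRingEnd ℂ) γ)).aroots ℂ) :=
          Multiset.toFinset_card_le _
      _ ≤ ((minpoly ℚ (γ - (starRingEnd ℂ) γ)).map (algebraMap ℚ ℂ)).natDegree :=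
          Polynomial.card_roots' _
      _ = (minpoly ℚ (γ - (starRingEnd ℂ) γ)).natDegree :=
          Polynomial.natDegree_map _
  -- conclude
  have hfinal : m * m - m ≤ d * d := hlb.trans hub
  have hm2 : 2 ≤ m := by omega
  obtain ⟨k, rfl⟩ : ∃ k, m = k + 1 := ⟨m - 1, by omega⟩
  have hdk : d ≤ k := by omega
  have hk1 : 1 ≤ k := by omega
  have h1 : (k + 1) * (k + 1) ≤ d * d + (k + 1) := by omega
  have h2 : d * d ≤ k * k := Nat.mul_le_mul hdk hdk
  nlinarith
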